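/- arXiv:1506.08450 — 5 statements merged into one kernel-verified Lean document; each statement's English description precedes it below -/
import Mathlib

section
/- Any minimizer of f_n over H lies in the finite-dimensional subspace H'_n = H0 + span{χ1 η_1, …, χ1 η_n}. -/
open scoped RealInnerProductSpace

/-!
Let `K = H0 ⊔ span {χ1 η_i}`; it contains `H0` and every `η_i = (η_i - χ1 η_i) + χ1 η_i`.
Split `μ = p + q` with `p ∈ K`, `q ∈ Kᗮ`. The data terms `⟪η_i, μ⟫` only see `p`, and since
`q ⊥ H0` we get `χ1 μ = χ1 p + q` with `χ1 p ∈ K ⊥ q`. Hence `f_n μ = f_n p + λ ‖q‖²`, so a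
minimizer has `q = 0`.
-/

namespace Submodule

variable {𝕜 E : Type*} [RCLike 𝕜] [NormedAddCommGroup E] [InnerProductSpace 𝕜 E]

theorem mem_sup_of_starProjection_orthogonal_mem {U W : Submodule 𝕜 E}
    [U.HasOrthogonalProjection] {v : E} (hv : Uᗮ.starProjection v ∈ W) : v ∈ U ⊔ W := by
  rw [← U.starProjection_add_starProjection_orthogonal v]
  exact add_mem_sup (U.starProjection_apply_mem v) hv

theorem starProjection_orthogonal_mem_of_le {U K : Submodule 𝕜 E} [U.HasOrthogonalProjection]
    (hUK : U ≤ K) {v : E} (hv : v ∈ K) : Uᗮ.starProjection v ∈ K := by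
  rw [starProjection_orthogonal_val]
  exact K.sub_mem hv (hUK (U.starProjection_apply_mem v))

theorem inner_starProjection_eq_of_mem_left {K : Submodule 𝕜 E} [K.HasOrthogonalProjection]
    {u : E} (hu : u ∈ K) (v : E) : inner 𝕜 u (K.starProjection v) = inner 𝕜 u v := by
  rw [← inner_starProjection_left_eq_right, starProjection_eq_self_iff.mpr hu]

theorem norm_starProjection_orthogonal_sq_of_le {U K : Submodule 𝕜 E} [U.HasOrthogonalProjection]
    [K.HasOrthogonalProjection] (hUK : U ≤ K) (v : E) :
    ‖Uᗮ.starProjection v‖ ^ 2 =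
      ‖Uᗮ.starProjection (K.starProjection v)‖ ^ 2 + ‖Kᗮ.starProjection v‖ ^ 2 := by
  have hsplit : Uᗮ.starProjection v =
      Uᗮ.starProjection (K.starProjection v) + Kᗮ.starProjection v := by
    conv_lhs => rw [← K.starProjection_add_starProjection_orthogonal v]
    rw [map_add, starProjection_eq_self_iff.mpr
      (orthogonal_le hUK (Kᗮ.starProjection_apply_mem v))]
  have horth : inner 𝕜 (Uᗮ.starProjection (K.starProjection v)) (Kᗮ.starProjection v) = 0 :=
    inner_right_of_mem_orthogonal
      (starProjection_orthogonal_mem_of_le hUK (K.starProjection_apply_mem v))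
      (Kᗮ.starProjection_apply_mem v)
  rw [hsplit, sq, sq, sq, norm_add_sq_eq_norm_sq_add_norm_sq_of_inner_eq_zero _ _ horth]

end Submodule

section PenalizedLeastSquares

variable {H : Type*} [NormedAddCommGroup H] [InnerProductSpace ℝ H] {n : ℕ}

noncomputable def penalizedLeastSquares (H0 : Submodule ℝ H) [H0ᗮ.HasOrthogonalProjection]
    (η : Fin n → H) (y : Fin n → ℝ) (lam : ℝ) (μ : H) : ℝ :=
  (1 / (n : ℝ)) * ∑ i, (y i - ⟪η i, μ⟫) ^ 2
    + lam * ‖(Submodule.orthogonalProjectionOnto H0ᗮ μ : H)‖ ^ 2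

variable {H0 K : Submodule ℝ H} [H0.HasOrthogonalProjection] [K.HasOrthogonalProjection]
  {η : Fin n → H} {y : Fin n → ℝ} {lam : ℝ}

theorem penalizedLeastSquares_eq_starProjection_add (hH0K : H0 ≤ K) (hηK : ∀ i, η i ∈ K)
    (μ : H) :
    penalizedLeastSquares H0 η y lam μ =
      penalizedLeastSquares H0 η y lam (K.starProjection μ)
        + lam * ‖Kᗮ.starProjection μ‖ ^ 2 := by
  simp only [penalizedLeastSquares, ← Submodule.starProjection_apply,
    Submodule.inner_starProjection_eq_of_mem_left (hηK _),
    Submodule.norm_starProjection_orthogonal_sq_of_le hH0K μ]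
  ring

theorem mem_of_forall_penalizedLeastSquares_le (hlam : 0 < lam)
    (hH0K : H0 ≤ K) (hηK : ∀ i, η i ∈ K) {μmin : H}
    (hmin : ∀ μ,
      penalizedLeastSquares H0 η y lam μmin ≤ penalizedLeastSquares H0 η y lam μ) :
    μmin ∈ K := by
  have h := hmin (K.starProjection μmin)
  rw [penalizedLeastSquares_eq_starProjection_add hH0K hηK μmin] at h
  have hsq : ‖Kᗮ.starProjection μmin‖ ^ 2 ≤ 0 :=
    nonpos_of_mul_nonpos_right (by linarith) hlam
  have hzero : μmin - K.starProjection μmin = 0 := by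
    simpa only [Submodule.starProjection_orthogonal_val, sq_nonpos_iff, norm_eq_zero] using hsq
  rw [sub_eq_zero.mp hzero]
  exact K.starProjection_apply_mem μmin

end PenalizedLeastSquares

theorem minimizer_mem_finite_dimensional_subspace_general
    {H : Type*} [NormedAddCommGroup H] [InnerProductSpace ℝ H]
    (H0 : Submodule ℝ H) [FiniteDimensional ℝ H0]
    (n : ℕ) (η : Fin n → H) (y : Fin n → ℝ) (lam : ℝ) (hlam : 0 < lam)
    (μmin : H)
    (hmin : ∀ μ : H,
      (1 / (n : ℝ)) * ∑ i, (y i - ⟪η i, μmin⟫) ^ 2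
          + lam * ‖(Submodule.orthogonalProjectionOnto H0ᗮ μmin : H)‖ ^ 2
        ≤ (1 / (n : ℝ)) * ∑ i, (y i - ⟪η i, μ⟫) ^ 2
          + lam * ‖(Submodule.orthogonalProjectionOnto H0ᗮ μ : H)‖ ^ 2) :
    μmin ∈ H0 ⊔ Submodule.span ℝ
      (Set.range fun i : Fin n => (Submodule.orthogonalProjectionOnto H0ᗮ (η i) : H)) := by
  set S := Submodule.span ℝ
    (Set.range fun i : Fin n => (Submodule.orthogonalProjectionOnto H0ᗮ (η i) : H))
  have : FiniteDimensional ℝ S := FiniteDimensional.span_of_finite ℝ (Set.finite_range _)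
  have : CompleteSpace ↥(H0 ⊔ S) := FiniteDimensional.complete ℝ _
  have hηK : ∀ i, η i ∈ H0 ⊔ S := fun i =>
    Submodule.mem_sup_of_starProjection_orthogonal_mem
      (Submodule.subset_span (Set.mem_range_self i))
  exact mem_of_forall_penalizedLeastSquares_le hlam le_sup_left hηK hmin

/-- Any minimizer of
`f_n(μ) = (1/n) ∑ i, (y i − ⟪η i, μ⟫)² + λ ‖χ1 μ‖²` over the real Hilbert space
`H = H0 ⊕ H0ᗮ` (with `dim H0 < ∞` and `χ1` the orthogonal projection onto `H1 = H0ᗮ`)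
lies in the finite-dimensional subspace `H'_n = H0 + span {χ1 η_1, …, χ1 η_n}`. -/
theorem minimizer_mem_finite_dimensional_subspace
    {H : Type*} [NormedAddCommGroup H] [InnerProductSpace ℝ H] [CompleteSpace H]
    (H0 : Submodule ℝ H) [FiniteDimensional ℝ H0]
    (n : ℕ) (η : Fin n → H) (y : Fin n → ℝ) (lam : ℝ) (hlam : 0 < lam)
    (μmin : H)
    (hmin : ∀ μ : H,
      (1 / (n : ℝ)) * ∑ i, (y i - ⟪η i, μmin⟫) ^ 2
          + lam * ‖(Submodule.orthogonalProjectionOnto H0ᗮ μmin : H)‖ ^ 2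
        ≤ (1 / (n : ℝ)) * ∑ i, (y i - ⟪η i, μ⟫) ^ 2
          + lam * ‖(Submodule.orthogonalProjectionOnto H0ᗮ μ : H)‖ ^ 2) :
    μmin ∈ H0 ⊔ Submodule.span ℝ
      (Set.range fun i : Fin n => (Submodule.orthogonalProjectionOnto H0ᗮ (η i) : H)) :=
  minimizer_mem_finite_dimensional_subspace_general H0 n η y lam hlam μmin hmin
end

section
/- Assume the nondegeneracy condition: the only μ ∈ H0 with ⟨η_i, μ⟩ = 0 for all i = 1, …, n is μ = 0. Then the bilinear form B(μ, ν) = (1/n) Σ_{i=1}^n ⟨η_i, μ⟩⟨η_i, ν⟩ + λ⟨χ1 μ, χ1 ν⟩ is bounded and coercive on H'_n, and the operator G_{n,λ} restricted to H'_n is a bijection of H'_n onto itself; i.e., for every r ∈ H'_n there exists a unique μ ∈ H'_n with G_{n,λ} μ = r. -/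
/-! The quadratic form `B(μ, μ) = (1/n) ∑ ⟪η i, μ⟫² + λ ‖χ₁ μ‖²` vanishes only if `χ₁ μ = 0`,
i.e. `μ ∈ H0`, and every `⟪η i, μ⟫ = 0`; so nondegeneracy makes it positive definite on all of `H`,
and `G` is injective because `⟪G μ, ν⟫ = B(μ, ν)`. The space `H'_n` is finite-dimensional and
`G`-invariant (`χ₁` kills `H0` and fixes each `χ₁ η i`), hence `G` restricts to a bijection of it,
and coercivity on it follows from compactness of its unit sphere. -/

open scoped RealInnerProductSpace

open Function Set Submodule

theorem exists_pos_mul_norm_sq_le_of_homogeneous {E : Type*} [NormedAddCommGroup E]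
    [NormedSpace ℝ E] [FiniteDimensional ℝ E] {q : E → ℝ} (hq : Continuous q)
    (hsmul : ∀ (a : ℝ) (x : E), q (a • x) = a ^ 2 * q x) (hpos : ∀ x ≠ 0, 0 < q x) :
    ∃ c, 0 < c ∧ ∀ x, c * ‖x‖ ^ 2 ≤ q x := by
  have hq0 : q 0 = 0 := by simpa using hsmul 0 0
  rcases subsingleton_or_nontrivial E with hE | hE
  · exact ⟨1, one_pos, fun x => by simp [Subsingleton.elim x 0, hq0]⟩
  obtain ⟨x₀, hx₀, hmin⟩ := (isCompact_sphere (0 : E) 1).exists_isMinOn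
    (NormedSpace.sphere_nonempty.2 zero_le_one) hq.continuousOn
  have hx₀ne : x₀ ≠ 0 := ne_zero_of_mem_unit_sphere ⟨x₀, hx₀⟩
  refine ⟨q x₀, hpos x₀ hx₀ne, fun x => ?_⟩
  rcases eq_or_ne x 0 with rfl | hx
  · simp [hq0]
  have hunit : ‖x‖⁻¹ • x ∈ Metric.sphere (0 : E) 1 := by
    simp [norm_smul, norm_ne_zero_iff.2 hx]
  calc q x₀ * ‖x‖ ^ 2 ≤ q (‖x‖⁻¹ • x) * ‖x‖ ^ 2 := by gcongr; exact hmin hunit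
    _ = q x := by rw [hsmul]; field_simp

theorem LinearMap.existsUnique_mem_and_apply_eq {K V : Type*} [Field K] [AddCommGroup V]
    [Module K V] {W : Submodule K V} [FiniteDimensional K W] {f : V →ₗ[K] V}
    (hf : Injective f) (hW : ∀ x ∈ W, f x ∈ W) {r : V} (hr : r ∈ W) :
    ∃! x, x ∈ W ∧ f x = r := by
  have hinj : Injective (f.restrict hW) := fun x y h => Subtype.ext (hf (congrArg Subtype.val h))
  obtain ⟨x, hx⟩ := LinearMap.injective_iff_surjective.1 hinj ⟨r, hr⟩
  have hfx : f x = r := congrArg Subtype.val hx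
  exact ⟨x, ⟨x.2, hfx⟩, fun y hy => hf (hy.2.trans hfx.symm)⟩

noncomputable section Penalized

variable {H : Type*} [NormedAddCommGroup H] [InnerProductSpace ℝ H]
  (H0 : Submodule ℝ H) [H0.HasOrthogonalProjection] {n : ℕ} (η : Fin n → H) (lam : ℝ)

def penalizedForm (μ ν : H) : ℝ :=
  (1 / n : ℝ) * ∑ i, ⟪η i, μ⟫ * ⟪η i, ν⟫ + lam * ⟪H0ᗮ.starProjection μ, H0ᗮ.starProjection ν⟫

def penalizedOp : H →L[ℝ] H :=
  (1 / n : ℝ) • ∑ i, (innerSL ℝ (η i)).smulRight (η i) + lam • H0ᗮ.starProjection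

def representerSpace : Submodule ℝ H :=
  H0 ⊔ span ℝ (range fun i => H0ᗮ.starProjection (η i))

theorem penalizedOp_apply (μ : H) :
    penalizedOp H0 η lam μ =
      (1 / n : ℝ) • ∑ i, ⟪η i, μ⟫ • η i + lam • H0ᗮ.starProjection μ := by
  simp [penalizedOp]

theorem penalizedForm_self (μ : H) :
    penalizedForm H0 η lam μ μ =
      (1 / n : ℝ) * ∑ i, ⟪η i, μ⟫ ^ 2 + lam * ‖H0ᗮ.starProjection μ‖ ^ 2 := by
  simp only [penalizedForm, real_inner_self_eq_norm_sq, sq]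

theorem penalizedForm_smul_self (a : ℝ) (μ : H) :
    penalizedForm H0 η lam (a • μ) (a • μ) = a ^ 2 * penalizedForm H0 η lam μ μ := by
  simp only [penalizedForm_self, map_smul, real_inner_smul_right, norm_smul, Real.norm_eq_abs,
    mul_pow, sq_abs, ← Finset.mul_sum]
  ring

theorem continuous_penalizedForm_self : Continuous fun μ => penalizedForm H0 η lam μ μ := by
  simp only [penalizedForm]
  fun_prop

theorem inner_penalizedOp (μ ν : H) :
    ⟪penalizedOp H0 η lam μ, ν⟫ = penalizedForm H0 η lam μ ν := by
  have hP : ⟪H0ᗮ.starProjection μ, ν⟫ = ⟪H0ᗮ.starProjection μ, H0ᗮ.starProjection ν⟫ := by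
    rw [← inner_starProjection_left_eq_right,
      starProjection_eq_self_iff.2 (starProjection_apply_mem _ _)]
  simp only [penalizedOp_apply, penalizedForm, inner_add_left, real_inner_smul_left, sum_inner,
    hP]

theorem abs_penalizedForm_le (μ ν : H) :
    |penalizedForm H0 η lam μ ν| ≤ ((1 / n : ℝ) * ∑ i, ‖η i‖ ^ 2 + |lam|) * ‖μ‖ * ‖ν‖ := by
  have hdata (i : Fin n) : |⟪η i, μ⟫ * ⟪η i, ν⟫| ≤ ‖η i‖ ^ 2 * (‖μ‖ * ‖ν‖) := by
    rw [abs_mul]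
    calc _ ≤ (‖η i‖ * ‖μ‖) * (‖η i‖ * ‖ν‖) := by gcongr <;> exact abs_real_inner_le_norm _ _
      _ = _ := by ring
  have hpen : |⟪H0ᗮ.starProjection μ, H0ᗮ.starProjection ν⟫| ≤ ‖μ‖ * ‖ν‖ :=
    (abs_real_inner_le_norm _ _).trans (by gcongr <;> exact norm_starProjection_apply_le _ _)
  calc |penalizedForm H0 η lam μ ν|
      ≤ (1 / n : ℝ) * ∑ i, |⟪η i, μ⟫ * ⟪η i, ν⟫|
          + |lam| * |⟪H0ᗮ.starProjection μ, H0ᗮ.starProjection ν⟫| := by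
        refine (abs_add_le _ _).trans ?_
        rw [abs_mul, abs_mul, abs_of_nonneg (by positivity : (0 : ℝ) ≤ 1 / n)]
        gcongr
        exact Finset.abs_sum_le_sum_abs _ _
    _ ≤ (1 / n : ℝ) * ∑ i, ‖η i‖ ^ 2 * (‖μ‖ * ‖ν‖) + |lam| * (‖μ‖ * ‖ν‖) := by
        gcongr with i
        exact hdata i
    _ = _ := by rw [← Finset.sum_mul]; ring

theorem penalizedForm_self_pos (hlam : 0 < lam) (hnd : ∀ μ ∈ H0, (∀ i, ⟪η i, μ⟫ = 0) → μ = 0)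
    {μ : H} (hμ : μ ≠ 0) : 0 < penalizedForm H0 η lam μ μ := by
  rw [penalizedForm_self]
  by_cases hP : H0ᗮ.starProjection μ = 0
  · have hμH0 : μ ∈ H0 := by
      simpa [H0.orthogonal_orthogonal] using (starProjection_apply_eq_zero_iff _).1 hP
    obtain ⟨i, hi⟩ : ∃ i, ⟪η i, μ⟫ ≠ 0 := by
      by_contra! h
      exact hμ (hnd μ hμH0 h)
    have hn : 0 < n := i.pos
    have hsum : 0 < ∑ j, ⟪η j, μ⟫ ^ 2 :=
      Finset.sum_pos' (fun j _ => sq_nonneg _) ⟨i, Finset.mem_univ i, by positivity⟩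
    rw [hP, norm_zero]
    positivity
  · have := norm_pos_iff.2 hP
    positivity

theorem penalizedOp_injective (hlam : 0 < lam)
    (hnd : ∀ μ ∈ H0, (∀ i, ⟪η i, μ⟫ = 0) → μ = 0) : Injective (penalizedOp H0 η lam) := by
  refine (injective_iff_map_eq_zero _).2 fun μ hμ => ?_
  by_contra hne
  have := penalizedForm_self_pos H0 η lam hlam hnd hne
  rw [← inner_penalizedOp, hμ, inner_zero_left] at this
  exact this.false

instance [FiniteDimensional ℝ H0] : FiniteDimensional ℝ (representerSpace H0 η) := by
  have := FiniteDimensional.span_of_finite ℝ (finite_range fun i => H0ᗮ.starProjection (η i))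
  exact finiteDimensional_sup _ _

theorem mem_representerSpace (i : Fin n) : η i ∈ representerSpace H0 η := by
  rw [← H0.starProjection_add_starProjection_orthogonal (η i)]
  exact add_mem_sup (starProjection_apply_mem _ _) (subset_span ⟨i, rfl⟩)

theorem starProjection_mem_representerSpace {μ : H} (hμ : μ ∈ representerSpace H0 η) :
    H0ᗮ.starProjection μ ∈ representerSpace H0 η := by
  obtain ⟨a, ha, b, hb, rfl⟩ := mem_sup.1 hμ
  have hb' : b ∈ H0ᗮ := span_le.2 (range_subset_iff.2 fun i => starProjection_apply_mem _ _) hb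
  rw [map_add, starProjection_orthogonal_apply_eq_zero ha, starProjection_eq_self_iff.2 hb',
    zero_add]
  exact mem_sup_right hb

theorem penalizedOp_mem_representerSpace {μ : H} (hμ : μ ∈ representerSpace H0 η) :
    penalizedOp H0 η lam μ ∈ representerSpace H0 η := by
  rw [penalizedOp_apply]
  exact add_mem (smul_mem _ _ (sum_mem fun i _ => smul_mem _ _ (mem_representerSpace H0 η i)))
    (smul_mem _ _ (starProjection_mem_representerSpace H0 η hμ))

end Penalized

theorem bilinear_form_bounded_coercive_and_G_bijective_general
    {H : Type*} [NormedAddCommGroup H] [InnerProductSpace ℝ H]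
    (H0 : Submodule ℝ H) [FiniteDimensional ℝ H0]
    (n : ℕ) (η : Fin n → H) (lam : ℝ) (hlam : 0 < lam)
    (B : H → H → ℝ)
    (hB : ∀ μ ν : H, B μ ν = ((1 : ℝ) / n) * ∑ i, ⟪η i, μ⟫ * ⟪η i, ν⟫
      + lam * ⟪(Submodule.orthogonalProjectionOnto H0ᗮ μ : H), (Submodule.orthogonalProjectionOnto H0ᗮ ν : H)⟫)
    (G : H → H)
    (hG : ∀ μ : H, G μ = ((1 : ℝ) / n) • ∑ i, ⟪η i, μ⟫ • η i
      + lam • (Submodule.orthogonalProjectionOnto H0ᗮ μ : H))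
    (H'n : Submodule ℝ H)
    (hH'n : H'n = H0 ⊔ Submodule.span ℝ
      (Set.range fun i : Fin n => (Submodule.orthogonalProjectionOnto H0ᗮ (η i) : H)))
    (hnd : ∀ μ ∈ H0, (∀ i, ⟪η i, μ⟫ = 0) → μ = 0) :
    (∃ C : ℝ, ∀ μ ∈ H'n, ∀ ν ∈ H'n, |B μ ν| ≤ C * ‖μ‖ * ‖ν‖) ∧
    (∃ c : ℝ, 0 < c ∧ ∀ μ ∈ H'n, c * ‖μ‖ ^ 2 ≤ B μ μ) ∧
    (∀ r ∈ H'n, ∃! μ : H, μ ∈ H'n ∧ G μ = r) := by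
  obtain rfl : B = penalizedForm H0 η lam := funext₂ hB
  obtain rfl : G = penalizedOp H0 η lam :=
    funext fun μ => (hG μ).trans (penalizedOp_apply H0 η lam μ).symm
  obtain rfl : H'n = representerSpace H0 η := hH'n
  refine ⟨⟨_, fun μ _ ν _ => abs_penalizedForm_le H0 η lam μ ν⟩, ?_, fun r hr => ?_⟩
  · obtain ⟨c, hc, hcoer⟩ := exists_pos_mul_norm_sq_le_of_homogeneous
      (q := fun μ : representerSpace H0 η => penalizedForm H0 η lam μ μ)
      ((continuous_penalizedForm_self H0 η lam).comp continuous_subtype_val)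
      (fun a μ => penalizedForm_smul_self H0 η lam a μ)
      (fun μ hμ => penalizedForm_self_pos H0 η lam hlam hnd (by simpa using hμ))
    exact ⟨c, hc, fun μ hμ => hcoer ⟨μ, hμ⟩⟩
  · exact LinearMap.existsUnique_mem_and_apply_eq (f := (penalizedOp H0 η lam : H →ₗ[ℝ] H))
      (penalizedOp_injective H0 η lam hlam hnd)
      (fun μ hμ => penalizedOp_mem_representerSpace H0 η lam hμ) hr

/-- Under the nondegeneracy condition (the only `μ ∈ H0` with
`⟪η i, μ⟫ = 0` for all `i` is `μ = 0`), the bilinear form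
`B(μ, ν) = (1/n) ∑ i, ⟪η i, μ⟫ ⟪η i, ν⟫ + λ ⟪χ1 μ, χ1 ν⟫` is bounded and coercive on
`H'_n = H0 + span {χ1 η_1, …, χ1 η_n}`, and `G_{n,λ} μ = (1/n) ∑ i, ⟪η i, μ⟫ η i + λ χ1 μ`
restricted to `H'_n` is a bijection of `H'_n` onto itself. -/
theorem bilinear_form_bounded_coercive_and_G_bijective
    {H : Type*} [NormedAddCommGroup H] [InnerProductSpace ℝ H] [CompleteSpace H]
    (H0 : Submodule ℝ H) [FiniteDimensional ℝ H0]
    (n : ℕ) (η : Fin n → H) (lam : ℝ) (hlam : 0 < lam)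
    (B : H → H → ℝ)
    (hB : ∀ μ ν : H, B μ ν = ((1 : ℝ) / n) * ∑ i, ⟪η i, μ⟫ * ⟪η i, ν⟫
      + lam * ⟪(Submodule.orthogonalProjectionOnto H0ᗮ μ : H), (Submodule.orthogonalProjectionOnto H0ᗮ ν : H)⟫)
    (G : H → H)
    (hG : ∀ μ : H, G μ = ((1 : ℝ) / n) • ∑ i, ⟪η i, μ⟫ • η i
      + lam • (Submodule.orthogonalProjectionOnto H0ᗮ μ : H))
    (H'n : Submodule ℝ H)
    (hH'n : H'n = H0 ⊔ Submodule.span ℝ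
      (Set.range fun i : Fin n => (Submodule.orthogonalProjectionOnto H0ᗮ (η i) : H)))
    (hnd : ∀ μ ∈ H0, (∀ i, ⟪η i, μ⟫ = 0) → μ = 0) :
    (∃ C : ℝ, ∀ μ ∈ H'n, ∀ ν ∈ H'n, |B μ ν| ≤ C * ‖μ‖ * ‖ν‖) ∧
    (∃ c : ℝ, 0 < c ∧ ∀ μ ∈ H'n, c * ‖μ‖ ^ 2 ≤ B μ μ) ∧
    (∀ r ∈ H'n, ∃! μ : H, μ ∈ H'n ∧ G μ = r) :=
  bilinear_form_bounded_coercive_and_G_bijective_general H0 n η lam hlam B hB G hG H'n hH'n hnd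
end

section
/- Assume the nondegeneracy condition: the only μ ∈ H0 with ⟨η_i, μ⟩ = 0 for all i = 1, …, n is μ = 0. Then f_n has a unique minimizer μ^n over H; moreover μ^n lies in H'_n = H0 + span{χ1 η_1, …, χ1 η_n} and satisfies G_{n,λ} μ^n = (1/n) Σ_{i=1}^n y_i η_i. -/
open scoped RealInnerProductSpace

/-!
`G = G_{n,λ}` is symmetric with `⟪G δ, δ⟫ = (1/n) ∑ ⟪η i, δ⟫² + λ ‖χ1 δ‖²`, which the
nondegeneracy condition makes positive for `δ ≠ 0`. Writing `b = (1/n) ∑ y i • η i`,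
`f_n μ = (1/n) ∑ (y i)² - 2 ⟪b, μ⟫ + ⟪G μ, μ⟫`, so any solution of `G μⁿ = b` satisfies
`f_n μ = f_n μⁿ + ⟪G (μ - μⁿ), μ - μⁿ⟫` and is the unique minimizer. Such a solution exists in
`H'_n`: this finite-dimensional space contains every `η i` and `H0`, hence is invariant under
`χ1 = 1 - χ0` and under `G`, and the injective `G` maps it onto itself.
-/

open Finset Submodule

theorem LinearMap.exists_mem_apply_eq_of_injective {K V : Type*} [DivisionRing K]
    [AddCommGroup V] [Module K V] {T : V →ₗ[K] V} (hT : Function.Injective T)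
    {W : Submodule K V} [FiniteDimensional K W] (hTW : ∀ v ∈ W, T v ∈ W) {b : V} (hb : b ∈ W) :
    ∃ x ∈ W, T x = b := by
  obtain ⟨x, hx⟩ := LinearMap.surjective_of_injective (f := T.restrict hTW)
    (fun u v h => Subtype.ext (hT (congrArg Subtype.val h))) ⟨b, hb⟩
  exact ⟨x, x.2, congrArg Subtype.val hx⟩

theorem Submodule.mem_sup_of_starProjection_orthogonal_mem_s2 {𝕜 E : Type*} [RCLike 𝕜]
    [NormedAddCommGroup E] [InnerProductSpace 𝕜 E] (K : Submodule 𝕜 E)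
    [K.HasOrthogonalProjection] {W : Submodule 𝕜 E} {v : E} (hv : Kᗮ.starProjection v ∈ W) :
    v ∈ K ⊔ W := by
  rw [← K.starProjection_add_starProjection_orthogonal v]
  exact add_mem_sup (K.starProjection_apply_mem v) hv

section Quadratic

variable {H : Type*} [NormedAddCommGroup H] [InnerProductSpace ℝ H]
  {G : H →ₗ[ℝ] H} {b : H} {c : ℝ}

theorem LinearMap.injective_of_inner_self_pos (hpos : ∀ δ ≠ 0, 0 < ⟪G δ, δ⟫) :
    Function.Injective G :=
  (injective_iff_map_eq_zero G).2 fun δ hδ => by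
    by_contra hne
    simpa [hδ] using hpos δ hne

theorem LinearMap.IsSymmetric.quadratic_eq_add_of_apply_eq (hG : G.IsSymmetric) {μ₀ : H}
    (hμ₀ : G μ₀ = b) (μ : H) :
    c - 2 * ⟪b, μ⟫ + ⟪G μ, μ⟫ = c - 2 * ⟪b, μ₀⟫ + ⟪G μ₀, μ₀⟫ + ⟪G (μ - μ₀), μ - μ₀⟫ := by
  have hsymm : ⟪G μ₀, μ⟫ = ⟪G μ, μ₀⟫ := by rw [hG, real_inner_comm]
  simp only [map_sub, inner_sub_left, inner_sub_right, ← hμ₀]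
  linarith

theorem LinearMap.IsSymmetric.isUniqueMin_of_apply_eq (hG : G.IsSymmetric)
    (hpos : ∀ δ ≠ 0, 0 < ⟪G δ, δ⟫) {μ₀ : H} (hμ₀ : G μ₀ = b) {f : H → ℝ}
    (hf : ∀ μ, f μ = c - 2 * ⟪b, μ⟫ + ⟪G μ, μ⟫) :
    (∀ μ, f μ₀ ≤ f μ) ∧ ∀ μ', (∀ μ, f μ' ≤ f μ) → μ' = μ₀ := by
  have hexp : ∀ μ, f μ = f μ₀ + ⟪G (μ - μ₀), μ - μ₀⟫ := fun μ => by
    rw [hf, hf, hG.quadratic_eq_add_of_apply_eq hμ₀]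
  refine ⟨fun μ => ?_, fun μ' hμ' => ?_⟩
  · rw [hexp μ]
    rcases eq_or_ne (μ - μ₀) 0 with h | h
    · simp [h]
    · linarith [hpos _ h]
  · by_contra hne
    have := hμ' μ₀
    rw [hexp μ'] at this
    linarith [hpos _ (sub_ne_zero.mpr hne)]

end Quadratic

section Spline

variable {H : Type*} [NormedAddCommGroup H] [InnerProductSpace ℝ H]
  {n : ℕ} (K : Submodule ℝ H) [K.HasOrthogonalProjection] (η : Fin n → H) (lam : ℝ)

/-- The operator `G_{n,λ}`; here `K = H0`, so `Kᗮ.starProjection = χ1`. -/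
noncomputable def splineOp : H →ₗ[ℝ] H :=
  (1 / n : ℝ) • ∑ i, (innerₗ H (η i)).smulRight (η i)
    + lam • (Kᗮ.starProjection : H →ₗ[ℝ] H)

theorem splineOp_apply (μ : H) :
    splineOp K η lam μ = (1 / n : ℝ) • ∑ i, ⟪η i, μ⟫ • η i + lam • Kᗮ.starProjection μ := by
  simp [splineOp]

theorem inner_splineOp_apply (μ ν : H) :
    ⟪splineOp K η lam μ, ν⟫ = (1 / n : ℝ) * ∑ i, ⟪η i, μ⟫ * ⟪η i, ν⟫
      + lam * ⟪Kᗮ.starProjection μ, Kᗮ.starProjection ν⟫ := by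
  have hP : ⟪Kᗮ.starProjection μ, ν⟫ = ⟪Kᗮ.starProjection μ, Kᗮ.starProjection ν⟫ := by
    rw [← inner_starProjection_left_eq_right,
      starProjection_eq_self_iff.mpr (Kᗮ.starProjection_apply_mem μ)]
  simp only [splineOp_apply, inner_add_left, real_inner_smul_left, sum_inner, hP]

theorem splineOp_isSymmetric : (splineOp K η lam).IsSymmetric := fun μ ν => by
  rw [inner_splineOp_apply, real_inner_comm _ μ, inner_splineOp_apply]
  simp only [mul_comm ⟪η _, μ⟫, real_inner_comm (Kᗮ.starProjection μ)]

theorem inner_splineOp_self (δ : H) :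
    ⟪splineOp K η lam δ, δ⟫
      = (1 / n : ℝ) * ∑ i, ⟪η i, δ⟫ ^ 2 + lam * ‖Kᗮ.starProjection δ‖ ^ 2 := by
  simp only [inner_splineOp_apply, real_inner_self_eq_norm_sq, sq]

variable {K η lam}

theorem inner_splineOp_self_pos (hlam : 0 < lam)
    (hnd : ∀ μ ∈ K, (∀ i, ⟪η i, μ⟫ = 0) → μ = 0) {δ : H} (hδ : δ ≠ 0) :
    0 < ⟪splineOp K η lam δ, δ⟫ := by
  rw [inner_splineOp_self]
  have hdata : 0 ≤ (1 / n : ℝ) * ∑ i, ⟪η i, δ⟫ ^ 2 := by positivity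
  by_cases hP : Kᗮ.starProjection δ = 0
  · have hδK : δ ∈ K := by
      rw [starProjection_orthogonal_val, sub_eq_zero] at hP
      exact hP ▸ K.starProjection_apply_mem δ
    obtain ⟨i, hi⟩ : ∃ i, ⟪η i, δ⟫ ≠ 0 := by
      by_contra! h
      exact hδ (hnd δ hδK h)
    have hn : (0 : ℝ) < n := by exact_mod_cast i.pos
    have : 0 < (1 / n : ℝ) * ∑ i, ⟪η i, δ⟫ ^ 2 :=
      mul_pos (by positivity) (sum_pos' (fun _ _ => sq_nonneg _) ⟨i, mem_univ i, by positivity⟩)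
    rw [hP, norm_zero]
    linarith
  · have : 0 < lam * ‖Kᗮ.starProjection δ‖ ^ 2 := by positivity
    linarith

theorem spline_objective_eq_quadratic (y : Fin n → ℝ) (μ : H) :
    (1 / n : ℝ) * ∑ i, (y i - ⟪η i, μ⟫) ^ 2 + lam * ‖Kᗮ.starProjection μ‖ ^ 2
      = (1 / n : ℝ) * ∑ i, y i ^ 2 - 2 * ⟪(1 / n : ℝ) • ∑ i, y i • η i, μ⟫
        + ⟪splineOp K η lam μ, μ⟫ := by
  have hsq : ∑ i, (y i - ⟪η i, μ⟫) ^ 2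
      = ∑ i, y i ^ 2 - 2 * ∑ i, y i * ⟪η i, μ⟫ + ∑ i, ⟪η i, μ⟫ ^ 2 := by
    simp only [sub_sq, sum_add_distrib, sum_sub_distrib, mul_sum, mul_assoc]
  rw [inner_splineOp_self, real_inner_smul_left, sum_inner, hsq]
  simp only [real_inner_smul_left]
  ring

theorem splineOp_mem {W : Submodule ℝ H} (hKW : K ≤ W) (hη : ∀ i, η i ∈ W) {v : H}
    (hv : v ∈ W) : splineOp K η lam v ∈ W := by
  rw [splineOp_apply, starProjection_orthogonal_val]
  exact add_mem (smul_mem _ _ (sum_mem fun i _ => smul_mem _ _ (hη i)))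
    (smul_mem _ _ (sub_mem hv (hKW (K.starProjection_apply_mem v))))

end Spline

theorem unique_minimizer_of_spline_functional_general
    {H : Type*} [NormedAddCommGroup H] [InnerProductSpace ℝ H]
    (H0 : Submodule ℝ H) [FiniteDimensional ℝ H0]
    (n : ℕ) (η : Fin n → H) (y : Fin n → ℝ) (lam : ℝ) (hlam : 0 < lam)
    (f : H → ℝ)
    (hf : ∀ μ : H, f μ = (1 / (n : ℝ)) * ∑ i, (y i - ⟪η i, μ⟫) ^ 2
      + lam * ‖(Submodule.orthogonalProjectionOnto H0ᗮ μ : H)‖ ^ 2)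
    (G : H → H)
    (hG : ∀ μ : H, G μ = ((1 : ℝ) / n) • ∑ i, ⟪η i, μ⟫ • η i
      + lam • (Submodule.orthogonalProjectionOnto H0ᗮ μ : H))
    (hnd : ∀ μ ∈ H0, (∀ i, ⟪η i, μ⟫ = 0) → μ = 0) :
    ∃ μn : H, (∀ μ : H, f μn ≤ f μ) ∧
      (∀ μ' : H, (∀ μ : H, f μ' ≤ f μ) → μ' = μn) ∧
      μn ∈ H0 ⊔ Submodule.span ℝ
        (Set.range fun i : Fin n => (Submodule.orthogonalProjectionOnto H0ᗮ (η i) : H)) ∧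
      G μn = ((1 : ℝ) / n) • ∑ i, y i • η i := by
  set W := H0 ⊔ span ℝ (Set.range fun i : Fin n => H0ᗮ.starProjection (η i))
  have hηW : ∀ i, η i ∈ W := fun i =>
    H0.mem_sup_of_starProjection_orthogonal_mem_s2 (subset_span ⟨i, rfl⟩)
  have : FiniteDimensional ℝ W :=
    have := FiniteDimensional.span_of_finite ℝ
      (Set.finite_range fun i : Fin n => H0ᗮ.starProjection (η i))
    Submodule.finiteDimensional_sup _ _
  have hpos : ∀ δ ≠ 0, 0 < ⟪splineOp H0 η lam δ, δ⟫ := fun δ => inner_splineOp_self_pos hlam hnd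
  obtain ⟨μn, hμnW, hμn⟩ :=
    LinearMap.exists_mem_apply_eq_of_injective (LinearMap.injective_of_inner_self_pos hpos)
    (fun v => splineOp_mem le_sup_left hηW)
    (b := ((1 : ℝ) / n) • ∑ i, y i • η i)
    (smul_mem _ _ (sum_mem fun i _ => smul_mem _ _ (hηW i)))
  obtain ⟨hmin, huniq⟩ := (splineOp_isSymmetric H0 η lam).isUniqueMin_of_apply_eq hpos hμn
    (f := f) fun μ => by rw [hf, ← starProjection_apply, spline_objective_eq_quadratic]
  refine ⟨μn, hmin, huniq, hμnW, ?_⟩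
  rw [hG, ← starProjection_apply, ← splineOp_apply, hμn]

/-- Under the nondegeneracy condition (the only `μ ∈ H0` with
`⟪η i, μ⟫ = 0` for all `i` is `μ = 0`), the functional
`f_n(μ) = (1/n) ∑ i, (y i − ⟪η i, μ⟫)² + λ ‖χ1 μ‖²` has a unique minimizer `μⁿ` over `H`;
moreover `μⁿ` lies in `H'_n = H0 + span {χ1 η_1, …, χ1 η_n}` and satisfies
`G_{n,λ} μⁿ = (1/n) ∑ i, y i • η i`. -/
theorem unique_minimizer_of_spline_functional
    {H : Type*} [NormedAddCommGroup H] [InnerProductSpace ℝ H] [CompleteSpace H]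
    (H0 : Submodule ℝ H) [FiniteDimensional ℝ H0]
    (n : ℕ) (η : Fin n → H) (y : Fin n → ℝ) (lam : ℝ) (hlam : 0 < lam)
    (f : H → ℝ)
    (hf : ∀ μ : H, f μ = (1 / (n : ℝ)) * ∑ i, (y i - ⟪η i, μ⟫) ^ 2
      + lam * ‖(Submodule.orthogonalProjectionOnto H0ᗮ μ : H)‖ ^ 2)
    (G : H → H)
    (hG : ∀ μ : H, G μ = ((1 : ℝ) / n) • ∑ i, ⟪η i, μ⟫ • η i
      + lam • (Submodule.orthogonalProjectionOnto H0ᗮ μ : H))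
    (hnd : ∀ μ ∈ H0, (∀ i, ⟪η i, μ⟫ = 0) → μ = 0) :
    ∃ μn : H, (∀ μ : H, f μn ≤ f μ) ∧
      (∀ μ' : H, (∀ μ : H, f μ' ≤ f μ) → μ' = μn) ∧
      μn ∈ H0 ⊔ Submodule.span ℝ
        (Set.range fun i : Fin n => (Submodule.orthogonalProjectionOnto H0ᗮ (η i) : H)) ∧
      G μn = ((1 : ℝ) / n) • ∑ i, y i • η i :=
  unique_minimizer_of_spline_functional_general H0 n η y lam hlam f hf G hG hnd
end

section
/- Suppose the empirical measures P_n = (1/n) Σ_{i=1}^n δ_{(t_i, y_i)} converge weakly to a finite Borel measure P on I × ℝ, and λ_n ≥ 0. Then for every ν ∈ H and every sequence ν^n converging weakly to ν in H, ∫_{I×ℝ} (y − ⟨η_t, ν⟩)² P(d(t,y)) ≤ liminf_{n→∞} [ (1/n) Σ_{i=1}^n (y_i − ⟨η_{t_i}, ν^n⟩)² + λ_n ‖χ1 ν^n‖² ]. -/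
open MeasureTheory Filter
open scoped RealInnerProductSpace

/-- A sequence in a normed space converges weakly to `l` if `F (x n) → F l` for every
bounded linear functional `F`. -/
def WeakConvSeq {X : Type*} [NormedAddCommGroup X] [NormedSpace ℝ X]
    (x : ℕ → X) (l : X) : Prop :=
  ∀ F : X →L[ℝ] ℝ, Tendsto (fun n => F (x n)) atTop (nhds (F l))

/-!
Write `r = y - ⟪η t, ν⟫` and `c_n = ⟪η t, νn n - ν⟫`, so that the `n`-th residual is `r - c_n`.
For a cutoff `0 ≤ θ(y) ≤ 1` of bounded support, `(r - c_n)² ≥ θ r² - 2 θ r c_n`. Averaged over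
the data, the first term is the empirical mean of a bounded continuous function and tends to
`∫ θ r² dP`; the second is `2 ⟪g_n, νn n - ν⟫`, where `g_n` is the empirical mean of the bounded
continuous `H`-valued map `θ r η`. Since `νn n - ν ⇀ 0`, this pairing vanishes in the limit as soon
as `g_n` converges in norm, which it does in the completion of `H`: `‖g_n - g‖²` expands into
integrals of the kernel `⟪G p, G q⟫` against products of empirical measures and `P`, and products
of weakly convergent probability measures converge weakly. Letting `θ` increase to `1` gives the
claim, by dominated convergence when `r²` is integrable (otherwise the left side is `0`).
-/

open scoped ENNReal BoundedContinuousFunction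
open TopologicalSpace

namespace WeakConvSeq

variable {E F : Type*} [NormedAddCommGroup E] [NormedSpace ℝ E] {x : ℕ → E} {l : E}

theorem exists_norm_le (hx : WeakConvSeq x l) : ∃ C, ∀ n, ‖x n‖ ≤ C := by
  obtain ⟨C, hC⟩ := banach_steinhaus (g := fun n => NormedSpace.inclusionInDoubleDual ℝ E (x n))
    fun F => (hx F).norm.bddAbove_range.imp fun _ h n => h ⟨n, rfl⟩
  exact ⟨C, fun n => ((NormedSpace.inclusionInDoubleDualLi ℝ).norm_map (x n)).symm.trans_le (hC n)⟩

theorem map [NormedAddCommGroup F] [NormedSpace ℝ F] (hx : WeakConvSeq x l) (T : E →L[ℝ] F) :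
    WeakConvSeq (fun n => T (x n)) (T l) :=
  fun Φ => hx (Φ.comp T)

theorem sub_const (hx : WeakConvSeq x l) : WeakConvSeq (fun n => x n - l) 0 := fun Φ => by
  simpa using (hx Φ).sub_const (Φ l)

theorem tendsto_inner [NormedAddCommGroup F] [InnerProductSpace ℝ F] {x : ℕ → F} {l : F}
    (hx : WeakConvSeq x l) {a : ℕ → F} {b : F} (ha : Tendsto a atTop (nhds b)) :
    Tendsto (fun n => ⟪a n, x n⟫) atTop (nhds ⟪b, l⟫) := by
  obtain ⟨C, hC⟩ := hx.exists_norm_le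
  have hsmall : Tendsto (fun n => ⟪a n - b, x n⟫) atTop (nhds 0) := by
    refine squeeze_zero_norm (fun n => ?_)
      (by simpa using (tendsto_iff_norm_sub_tendsto_zero.1 ha).mul_const C)
    exact (norm_inner_le_norm _ _).trans (mul_le_mul_of_nonneg_left (hC n) (norm_nonneg _))
  have hfixed : Tendsto (fun n => ⟪b, x n⟫) atTop (nhds ⟪b, l⟫) := hx (innerSL ℝ b)
  simpa [inner_sub_left] using hsmall.add hfixed

end WeakConvSeq

theorem EReal.coe_le_liminf_of_tendsto {u v : ℕ → ℝ} {L : ℝ} (hu : Tendsto u atTop (nhds L))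
    (huv : ∀ n, u n ≤ v n) : (L : EReal) ≤ liminf (fun n => (v n : EReal)) atTop := by
  rw [← (EReal.tendsto_coe.2 hu).liminf_eq]
  exact liminf_le_liminf (.of_forall fun n => EReal.coe_le_coe_iff.2 (huv n))

theorem mul_sq_sub_two_mul_le_sq_sub {θ r c : ℝ} (h0 : 0 ≤ θ) (h1 : θ ≤ 1) :
    θ * r ^ 2 - 2 * (θ * r) * c ≤ (r - c) ^ 2 := by
  nlinarith [mul_nonneg (sub_nonneg.2 h1) (sq_nonneg (r - c)), mul_nonneg h0 (sq_nonneg c)]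

namespace MeasureTheory

section EmpiricalMean

variable {X : Type*} {z : ℕ → X}

noncomputable def empiricalMean {E : Type*} [AddCommGroup E] [Module ℝ E] (f : X → E)
    (z : ℕ → X) (n : ℕ) : E :=
  (1 / (n : ℝ)) • ∑ i ∈ Finset.range n, f (z i)

theorem empiricalMean_const {E : Type*} [AddCommGroup E] [Module ℝ E] (c : E) {n : ℕ}
    (hn : n ≠ 0) : empiricalMean (fun _ => c) z n = c := by
  simp only [empiricalMean, Finset.sum_const, Finset.card_range, ← Nat.cast_smul_eq_nsmul ℝ,
    smul_smul]
  rw [one_div, inv_mul_cancel₀ (Nat.cast_ne_zero.2 hn), one_smul]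

theorem map_empiricalMean {E F : Type*} [AddCommGroup E] [Module ℝ E] [AddCommGroup F]
    [Module ℝ F] (L : E →ₗ[ℝ] F) (f : X → E) (n : ℕ) :
    L (empiricalMean f z n) = empiricalMean (fun x => L (f x)) z n := by
  simp [empiricalMean, map_sum]

theorem empiricalMean_mono {f g : X → ℝ} (hfg : ∀ x, f x ≤ g x) (n : ℕ) :
    empiricalMean f z n ≤ empiricalMean g z n :=
  smul_le_smul_of_nonneg_left (Finset.sum_le_sum fun i _ => hfg (z i)) (by positivity)

theorem empiricalMean_mul_sq_sub_inner_le {H : Type*} [NormedAddCommGroup H]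
    [InnerProductSpace ℝ H] {a r : X → ℝ} (ha0 : ∀ x, 0 ≤ a x) (ha1 : ∀ x, a x ≤ 1) (e : X → H)
    (w : H) (n : ℕ) :
    empiricalMean (fun x => a x * r x ^ 2) z n -
        2 * ⟪empiricalMean (fun x => (a x * r x) • e x) z n, w⟫ ≤
      empiricalMean (fun x => (r x - ⟪e x, w⟫) ^ 2) z n := by
  have hsplit : empiricalMean (fun x => a x * r x ^ 2) z n -
        2 * ⟪empiricalMean (fun x => (a x * r x) • e x) z n, w⟫ =
      empiricalMean (fun x => a x * r x ^ 2 - 2 * (a x * r x) * ⟪e x, w⟫) z n := by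
    simp only [empiricalMean, real_inner_smul_left, sum_inner, smul_eq_mul,
      Finset.sum_sub_distrib, mul_assoc, ← Finset.mul_sum]
    ring
  exact hsplit ▸ empiricalMean_mono (fun x => mul_sq_sub_two_mul_le_sq_sub (ha0 x) (ha1 x)) n

end EmpiricalMean

section HilbertValuedIntegral

variable {X : Type*} [TopologicalSpace X] [MeasurableSpace X] [SecondCountableTopology X]
  [OpensMeasurableSpace X] {F : Type*} [NormedAddCommGroup F] [InnerProductSpace ℝ F]
  [CompleteSpace F]

theorem _root_.BoundedContinuousFunction.integrable_of_secondCountable {E : Type*}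
    [NormedAddCommGroup E] (G : X →ᵇ E) (μ : Measure X) [IsFiniteMeasure μ] :
    Integrable G μ :=
  .of_bound G.continuous.aestronglyMeasurable ‖G‖ (.of_forall G.norm_coe_le_norm)

noncomputable def _root_.BoundedContinuousFunction.innerKernel (G : X →ᵇ F) : X × X →ᵇ ℝ :=
  .ofNormedAddCommGroup (fun z => ⟪G z.1, G z.2⟫) (by fun_prop) (‖G‖ * ‖G‖) fun z =>
    (norm_inner_le_norm _ _).trans (mul_le_mul (G.norm_coe_le_norm _) (G.norm_coe_le_norm _)
      (norm_nonneg _) (norm_nonneg _))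

theorem integral_innerKernel_prod (G : X →ᵇ F) (μ ν : Measure X) [IsFiniteMeasure μ]
    [IsFiniteMeasure ν] :
    ∫ z, G.innerKernel z ∂(μ.prod ν) = ⟪∫ x, G x ∂μ, ∫ x, G x ∂ν⟫ := by
  rw [integral_prod _ (G.innerKernel.integrable _)]
  simp only [BoundedContinuousFunction.innerKernel,
    BoundedContinuousFunction.coe_ofNormedAddCommGroup]
  simp_rw [integral_inner (G.integrable_of_secondCountable ν),
    real_inner_comm (∫ x, G x ∂ν)]
  exact integral_inner (G.integrable_of_secondCountable μ) _

theorem ProbabilityMeasure.tendsto_integral_of_tendsto [PseudoMetrizableSpace X] {γ : Type*}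
    {l : Filter γ} {μs : γ → ProbabilityMeasure X} {μ : ProbabilityMeasure X}
    (h : Tendsto μs l (nhds μ)) (G : X →ᵇ F) :
    Tendsto (fun i => ∫ x, G x ∂(μs i : Measure X)) l (nhds (∫ x, G x ∂(μ : Measure X))) := by
  set b := ∫ x, G x ∂(μ : Measure X)
  have hpair : ∀ {ν₁ ν₂ : γ → ProbabilityMeasure X}, Tendsto ν₁ l (nhds μ) →
      Tendsto ν₂ l (nhds μ) →
      Tendsto (fun i => ⟪∫ x, G x ∂(ν₁ i : Measure X), ∫ x, G x ∂(ν₂ i : Measure X)⟫) l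
        (nhds ⟪b, b⟫) := fun h₁ h₂ => by
    have := ProbabilityMeasure.tendsto_iff_forall_integral_tendsto.1
      ((ProbabilityMeasure.continuous_prod.tendsto (μ, μ)).comp (h₁.prodMk_nhds h₂)) G.innerKernel
    simpa only [Function.comp_apply, ProbabilityMeasure.toMeasure_prod,
      integral_innerKernel_prod] using this
  have hsq : Tendsto (fun i => ‖∫ x, G x ∂(μs i : Measure X) - b‖ ^ 2) l (nhds 0) := by
    have := ((hpair h h).sub ((hpair h tendsto_const_nhds).const_mul 2)).add_const ⟪b, b⟫
    rw [show ⟪b, b⟫ - 2 * ⟪b, b⟫ + ⟪b, b⟫ = 0 by ring] at this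
    refine this.congr fun i => ?_
    rw [norm_sub_sq_real, real_inner_self_eq_norm_sq, real_inner_self_eq_norm_sq]
  refine tendsto_iff_norm_sub_tendsto_zero.2 ?_
  simpa [Real.sqrt_sq (norm_nonneg _)] using hsq.sqrt

end HilbertValuedIntegral

section EmpiricalMeasure

variable {X : Type*} [MeasurableSpace X] {z : ℕ → X}

/-- Built on the `n + 1` points `z 0, …, z n`, so that it is a probability measure for every `n`. -/
noncomputable def empiricalMeasure (z : ℕ → X) (n : ℕ) : ProbabilityMeasure X :=
  ⟨((n + 1 : ℕ) : ℝ≥0∞)⁻¹ • ∑ i ∈ Finset.range (n + 1), Measure.dirac (z i), ⟨by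
    simp [ENNReal.inv_mul_cancel]⟩⟩

theorem integral_empiricalMeasure [MeasurableSingletonClass X] {E : Type*} [NormedAddCommGroup E]
    [NormedSpace ℝ E] [CompleteSpace E] (f : X → E) (n : ℕ) :
    ∫ x, f x ∂(empiricalMeasure z n : Measure X) = empiricalMean f z (n + 1) := by
  simp [empiricalMeasure, empiricalMean, integral_finsetSum_measure, integrable_dirac,
    ENNReal.toReal_add]

variable [TopologicalSpace X] {P : Measure X}
  (hP : ∀ f : X →ᵇ ℝ, Tendsto (empiricalMean f z) atTop (nhds (∫ x, f x ∂P)))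
include hP

theorem isProbabilityMeasure_of_tendsto_empiricalMean : IsProbabilityMeasure P := by
  have hone : Tendsto (empiricalMean (BoundedContinuousFunction.const X (1 : ℝ)) z) atTop
      (nhds 1) :=
    tendsto_const_nhds.congr' <| (eventually_ne_atTop 0).mono fun n hn =>
      (empiricalMean_const 1 hn).symm
  have := tendsto_nhds_unique (hP _) hone
  simp only [BoundedContinuousFunction.const_apply, integral_const, smul_eq_mul, mul_one] at this
  exact ⟨(ENNReal.toReal_eq_one_iff _).1 this⟩

variable [OpensMeasurableSpace X] [MeasurableSingletonClass X]

theorem tendsto_empiricalMeasure [IsProbabilityMeasure P] :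
    Tendsto (empiricalMeasure z) atTop (nhds ⟨P, inferInstance⟩) :=
  ProbabilityMeasure.tendsto_iff_forall_integral_tendsto.2 fun f => by
    simpa only [integral_empiricalMeasure, ProbabilityMeasure.coe_mk] using
      (tendsto_add_atTop_iff_nat 1).2 (hP f)

variable [SecondCountableTopology X] [PseudoMetrizableSpace X]

theorem tendsto_empiricalMean {F : Type*} [NormedAddCommGroup F] [InnerProductSpace ℝ F]
    [CompleteSpace F] (G : X →ᵇ F) :
    Tendsto (empiricalMean G z) atTop (nhds (∫ x, G x ∂P)) := by
  have := isProbabilityMeasure_of_tendsto_empiricalMean hP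
  refine (tendsto_add_atTop_iff_nat 1).1 ?_
  simpa only [integral_empiricalMeasure, ProbabilityMeasure.coe_mk] using
    ProbabilityMeasure.tendsto_integral_of_tendsto (tendsto_empiricalMeasure hP) G

theorem tendsto_inner_empiricalMean {H : Type*} [NormedAddCommGroup H] [InnerProductSpace ℝ H]
    (G : X →ᵇ H) {x : ℕ → H} (hx : WeakConvSeq x 0) :
    Tendsto (fun n => ⟪empiricalMean G z n, x n⟫) atTop (nhds 0) := by
  -- `H` need not be complete: the empirical means converge in its completion.
  let ι : H →L[ℝ] UniformSpace.Completion H := UniformSpace.Completion.toComplL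
  have := (hx.map ι).tendsto_inner (tendsto_empiricalMean hP (ι.compLeftContinuousBounded X G))
  rw [map_zero, inner_zero_right] at this
  refine this.congr fun n => ?_
  rw [show empiricalMean (ι.compLeftContinuousBounded X G) z n = ι (empiricalMean G z n) from
    (map_empiricalMean ι.toLinearMap G n).symm]
  exact UniformSpace.Completion.inner_coe _ _

end EmpiricalMeasure

section Regression

variable {T : Type*} [TopologicalSpace T] [SecondCountableTopology T] [PseudoMetrizableSpace T]
  [MeasurableSpace T] [OpensMeasurableSpace T] [MeasurableSingletonClass T]
  {H : Type*} [NormedAddCommGroup H] [InnerProductSpace ℝ H]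
  (η : T →ᵇ H) {z : ℕ → T × ℝ} {P : Measure (T × ℝ)}
  (hP : ∀ f : T × ℝ →ᵇ ℝ, Tendsto (empiricalMean f z) atTop (nhds (∫ p, f p ∂P)))
  {ν : H} {νn : ℕ → H} (hν : WeakConvSeq νn ν)
include hP hν

theorem integral_cutoff_mul_sq_residual_le_liminf {θ : ℝ → ℝ} (hθ : Continuous θ)
    (hθ0 : ∀ y, 0 ≤ θ y) (hθ1 : ∀ y, θ y ≤ 1) {R : ℝ} (hθR : ∀ y, θ y ≠ 0 → |y| ≤ R) :
    ((∫ p, θ p.2 * (p.2 - ⟪η p.1, ν⟫) ^ 2 ∂P : ℝ) : EReal) ≤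
      liminf (fun n => ((empiricalMean (fun p => (p.2 - ⟪η p.1, νn n⟫) ^ 2) z n : ℝ) : EReal))
        atTop := by
  set B := |R| + ‖η‖ * ‖ν‖
  have hres : ∀ p : T × ℝ, θ p.2 ≠ 0 → |p.2 - ⟪η p.1, ν⟫| ≤ B := fun p hp =>
    calc |p.2 - ⟪η p.1, ν⟫| ≤ |p.2| + ‖η p.1‖ * ‖ν‖ :=
          (abs_sub _ _).trans (add_le_add_right (abs_real_inner_le_norm _ _) _)
      _ ≤ B := add_le_add ((hθR _ hp).trans (le_abs_self R))
          (mul_le_mul_of_nonneg_right (η.norm_coe_le_norm _) (norm_nonneg _))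
  let A : T × ℝ →ᵇ ℝ := .ofNormedAddCommGroup (fun p => θ p.2 * (p.2 - ⟪η p.1, ν⟫) ^ 2)
    (by fun_prop) (B ^ 2) fun p => by
      by_cases hp : θ p.2 = 0
      · simp [hp]; positivity
      rw [Real.norm_eq_abs, abs_mul, abs_of_nonneg (hθ0 _), abs_pow]
      exact (mul_le_of_le_one_left (by positivity) (hθ1 _)).trans
        (pow_le_pow_left₀ (abs_nonneg _) (hres p hp) 2)
  let G : T × ℝ →ᵇ H := .ofNormedAddCommGroup (fun p => (θ p.2 * (p.2 - ⟪η p.1, ν⟫)) • η p.1)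
    (by fun_prop) (B * ‖η‖) fun p => by
      by_cases hp : θ p.2 = 0
      · simp [hp]; positivity
      rw [norm_smul, Real.norm_eq_abs, abs_mul, abs_of_nonneg (hθ0 _)]
      exact mul_le_mul ((mul_le_of_le_one_left (abs_nonneg _) (hθ1 _)).trans (hres p hp))
        (η.norm_coe_le_norm _) (norm_nonneg _) (by positivity)
  have hlim := (hP A).sub ((tendsto_inner_empiricalMean hP G hν.sub_const).const_mul 2)
  rw [mul_zero, sub_zero] at hlim
  refine EReal.coe_le_liminf_of_tendsto hlim fun n => ?_
  refine (empiricalMean_mul_sq_sub_inner_le (a := fun p : T × ℝ => θ p.2)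
    (r := fun p => p.2 - ⟪η p.1, ν⟫) (hθ0 ·.2) (hθ1 ·.2) (fun p => η p.1) (νn n - ν) n).trans_eq ?_
  congr 1 with p
  rw [inner_sub_right]
  ring

theorem integral_sq_residual_le_liminf :
    ((∫ p, (p.2 - ⟪η p.1, ν⟫) ^ 2 ∂P : ℝ) : EReal) ≤
      liminf (fun n => ((empiricalMean (fun p => (p.2 - ⟪η p.1, νn n⟫) ^ 2) z n : ℝ) : EReal))
        atTop := by
  by_cases hint : Integrable (fun p : T × ℝ => (p.2 - ⟪η p.1, ν⟫) ^ 2) P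
  swap
  · rw [integral_undef hint, EReal.coe_zero]
    refine le_liminf_of_le (by isBoundedDefault) (.of_forall fun n => EReal.coe_nonneg.2 ?_)
    simpa [empiricalMean] using
      empiricalMean_mono (z := z) (fun p : T × ℝ => sq_nonneg (p.2 - ⟪η p.1, νn n⟫)) n
  let θ : ℕ → ℝ → ℝ := fun M y => max 0 (min 1 (M + 1 - |y|))
  have hθ0 : ∀ M y, 0 ≤ θ M y := fun M y => le_max_left _ _
  have hθ1 : ∀ M y, θ M y ≤ 1 := fun M y => max_le zero_le_one (min_le_left _ _)
  have hθR : ∀ M y, θ M y ≠ 0 → |y| ≤ M + 1 := fun M y hy => by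
    by_contra h
    exact hy (max_eq_left (min_le_of_right_le (by linarith)))
  have hθlim : ∀ y, ∀ᶠ M in atTop, θ M y = 1 := fun y => by
    filter_upwards [eventually_ge_atTop ⌈|y|⌉₊] with M hM
    have : |y| ≤ M := (Nat.le_ceil _).trans (by exact_mod_cast hM)
    simp only [θ]
    rw [min_eq_left (by linarith), max_eq_right zero_le_one]
  have hlim : Tendsto (fun M : ℕ => ∫ p, θ M p.2 * (p.2 - ⟪η p.1, ν⟫) ^ 2 ∂P) atTop
      (nhds (∫ p, (p.2 - ⟪η p.1, ν⟫) ^ 2 ∂P)) := by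
    refine tendsto_integral_of_dominated_convergence _
      (fun M => (by fun_prop : Continuous _).aestronglyMeasurable) hint
      (fun M => .of_forall fun p => ?_) (.of_forall fun p => ?_)
    · rw [Real.norm_eq_abs, abs_of_nonneg (by have := hθ0 M p.2; positivity)]
      exact mul_le_of_le_one_left (sq_nonneg _) (hθ1 M p.2)
    · exact tendsto_const_nhds.congr' ((hθlim p.2).mono fun M hM => by simp [hM])
  exact le_of_tendsto' (EReal.tendsto_coe.2 hlim) fun M =>
    integral_cutoff_mul_sq_residual_le_liminf η hP hν (by fun_prop) (hθ0 M) (hθ1 M) (hθR M)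

end Regression

end MeasureTheory

theorem gamma_liminf_inequality_general
    {H : Type*} [NormedAddCommGroup H] [InnerProductSpace ℝ H]
    (H1 : Submodule ℝ H) [H1.HasOrthogonalProjection]
    {d : ℕ} (I : Set (EuclideanSpace ℝ (Fin d)))
    (η : I → H) (α : ℝ) (hηbd : ∀ s : I, ‖η s‖ ≤ α) (hηcont : Continuous η)
    (t : ℕ → I) (y : ℕ → ℝ)
    (lam : ℕ → ℝ) (hlam : ∀ n, 0 ≤ lam n)
    (P : Measure (I × ℝ))
    (hweak : ∀ h : BoundedContinuousFunction (I × ℝ) ℝ,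
      Tendsto (fun n : ℕ => (1 / (n : ℝ)) * ∑ i ∈ Finset.range n, h (t i, y i))
        atTop (nhds (∫ z, h z ∂P)))
    (ν : H) (νn : ℕ → H) (hν : WeakConvSeq νn ν) :
    ((∫ z : I × ℝ, (z.2 - ⟪η z.1, ν⟫) ^ 2 ∂P : ℝ) : EReal)
      ≤ liminf (fun n : ℕ =>
          (((1 / (n : ℝ)) * ∑ i ∈ Finset.range n, (y i - ⟪η (t i), νn n⟫) ^ 2
            + lam n * ‖(H1.orthogonalProjectionOnto (νn n) : H)‖ ^ 2 : ℝ) : EReal))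
        atTop := by
  have hP : ∀ f : I × ℝ →ᵇ ℝ, Tendsto (empiricalMean f fun i => (t i, y i)) atTop
      (nhds (∫ p, f p ∂P)) := hweak
  exact (integral_sq_residual_le_liminf (.ofNormedAddCommGroup η hηcont α hηbd) hP hν).trans
    (liminf_le_liminf (.of_forall fun n => EReal.coe_le_coe_iff.2
      (le_add_of_nonneg_right (mul_nonneg (hlam n) (sq_nonneg _)))))

/-- **liminf inequality.** Let `H` be a real Hilbert space with orthogonal
projection `χ1` onto a closed subspace, `I ⊆ ℝ^d`, `η : I → H` continuous with `‖η t‖ ≤ α`,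
`(t i, y i)` a sequence in `I × ℝ` whose empirical measures converge weakly to the finite
Borel measure `P`, and `λ n ≥ 0`. Then for every `ν ∈ H` and every sequence `νn ⇀ ν` weakly
in `H`,
`∫ (y − ⟪η t, ν⟫)² dP ≤ liminf_n [(1/n) ∑_{i<n} (y i − ⟪η (t i), νn n⟫)² + λ n ‖χ1 (νn n)‖²]`. -/
theorem gamma_liminf_inequality
    {H : Type*} [NormedAddCommGroup H] [InnerProductSpace ℝ H]
    (H1 : Submodule ℝ H) [H1.HasOrthogonalProjection]
    {d : ℕ} (I : Set (EuclideanSpace ℝ (Fin d)))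
    (η : I → H) (α : ℝ) (hηbd : ∀ s : I, ‖η s‖ ≤ α) (hηcont : Continuous η)
    (t : ℕ → I) (y : ℕ → ℝ)
    (lam : ℕ → ℝ) (hlam : ∀ n, 0 ≤ lam n)
    (P : Measure (I × ℝ)) [IsFiniteMeasure P]
    (hweak : ∀ h : BoundedContinuousFunction (I × ℝ) ℝ,
      Tendsto (fun n : ℕ => (1 / (n : ℝ)) * ∑ i ∈ Finset.range n, h (t i, y i))
        atTop (nhds (∫ z, h z ∂P)))
    (ν : H) (νn : ℕ → H) (hν : WeakConvSeq νn ν) :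
    ((∫ z : I × ℝ, (z.2 - ⟪η z.1, ν⟫) ^ 2 ∂P : ℝ) : EReal)
      ≤ liminf (fun n : ℕ =>
          (((1 / (n : ℝ)) * ∑ i ∈ Finset.range n, (y i - ⟪η (t i), νn n⟫) ^ 2
            + lam n * ‖(H1.orthogonalProjectionOnto (νn n) : H)‖ ^ 2 : ℝ) : EReal))
        atTop :=
  gamma_liminf_inequality_general H1 I η α hηbd hηcont t y lam hlam P hweak ν νn hν
end

section
/- Let e_1, e_2, … be an orthonormal sequence in H1, let α > 0, set η_i = α e_i, and for λ > 0 let G_{n,λ} μ = (1/n) Σ_{i=1}^n ⟨η_i, μ⟩ η_i + λ χ1 μ. Let ε_1, …, ε_n be independent real random variables with mean 0 and variance σ² > 0, and set ν_n = (1/n) Σ_{i=1}^n ε_i η_i. Then G_{n,λ} e_i = (α²/n + λ) e_i for i ≤ n, ν_n lies in span{e_1, …, e_n} so that G_{n,λ}^{-1} ν_n is well defined, and E[ ‖G_{n,λ}^{-1} ν_n‖² ] = σ² α² / ( n (α²/n + λ)² ). In particular, if λ = λ_n = n^{−p} with p > 1/2, then E[ ‖G_{n,λ_n}^{-1} ν_n‖²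 ] → ∞ as n → ∞. -/
/-!
The noise `ν_n` lies in `span {e_i : i < n}`, on which `G_{n,λ}` acts as the scalar
`α²/n + λ`; hence `G_{n,λ}⁻¹ ν_n = (α²/n + λ)⁻¹ ν_n`. By orthonormality its squared norm is
`(α/(n (α²/n + λ)))² ∑_{i<n} ε_i²`, whose expectation is `σ² α² / (n (α²/n + λ)²)`.
For `λ = n^{-p}` the denominator is `α⁴/n + 2α² n^{-p} + n^{1-2p}`, which tends to `0⁺`
exactly because `p > 1/2`.
-/

open MeasureTheory ProbabilityTheory Filter Finset Topology
open scoped RealInnerProductSpace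

section Orthonormal

variable {H ι : Type*} [NormedAddCommGroup H] [InnerProductSpace ℝ H] {e : ι → H}

theorem Orthonormal.sum_inner_smul_eq_self (he : Orthonormal ℝ e) {s : Finset ι} {i : ι}
    (hi : i ∈ s) : ∑ j ∈ s, ⟪e j, e i⟫ • e j = e i := by
  rw [sum_eq_single_of_mem i hi fun j _ hji => by rw [he.2 hji, zero_smul],
    real_inner_self_eq_norm_sq, he.1 i, one_pow, one_smul]

theorem Orthonormal.norm_sum_smul_sq (he : Orthonormal ℝ e) (b : ι → ℝ) (s : Finset ι) :
    ‖∑ i ∈ s, b i • e i‖ ^ 2 = ∑ i ∈ s, b i ^ 2 := by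
  rw [← real_inner_self_eq_norm_sq, he.inner_sum]
  simp [sq]

theorem Orthonormal.integral_norm_smul_sum_sq {Ω : Type*} [MeasurableSpace Ω] {P : Measure Ω}
    (he : Orthonormal ℝ e) {X : ι → Ω → ℝ} {σ : ℝ} (hX : ∀ i, MemLp (X i) 2 P)
    (hvar : ∀ i, ∫ ω, X i ω ^ 2 ∂P = σ ^ 2) (a : ℝ) (s : Finset ι) :
    ∫ ω, ‖a • ∑ i ∈ s, X i ω • e i‖ ^ 2 ∂P = a ^ 2 * #s * σ ^ 2 := by
  simp_rw [norm_smul, mul_pow, he.norm_sum_smul_sq, Real.norm_eq_abs, sq_abs]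
  rw [integral_const_mul, integral_finsetSum s fun i _ => (hX i).integrable_sq]
  simp [hvar, mul_assoc]

end Orthonormal

theorem sum_range_smul_mem_span_image_Iio {R M : Type*} [Semiring R] [AddCommMonoid M]
    [Module R M] (v : ℕ → M) (b : ℕ → R) (n : ℕ) :
    ∑ i ∈ range n, b i • v i ∈ Submodule.span R (v '' Set.Iio n) :=
  Submodule.sum_mem _ fun i hi =>
    Submodule.smul_mem _ _ (Submodule.subset_span ⟨i, mem_range.mp hi, rfl⟩)

section RegularizedGram

variable {H : Type*} [NormedAddCommGroup H] [InnerProductSpace ℝ H]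
  (K : Submodule ℝ H) [K.HasOrthogonalProjection]

noncomputable def regularizedGram (η : ℕ → H) (n : ℕ) (lam : ℝ) : H →ₗ[ℝ] H where
  toFun μ := ((1 : ℝ) / n) • ∑ i ∈ range n, ⟪η i, μ⟫ • η i
    + lam • (K.orthogonalProjectionOnto μ : H)
  map_add' μ₁ μ₂ := by
    simp only [inner_add_right, add_smul, sum_add_distrib, map_add, Submodule.coe_add, smul_add]
    abel
  map_smul' c μ := by
    simp only [inner_smul_right, mul_smul, ← smul_sum, map_smul, Submodule.coe_smul,
      smul_add, RingHom.id_apply]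
    rw [smul_comm _ c, smul_comm lam c]

variable {K} {e : ℕ → H} (he : Orthonormal ℝ e) (heK : ∀ i, e i ∈ K) (α lam : ℝ) {n : ℕ}
include he heK

theorem regularizedGram_apply_of_lt {i : ℕ} (hi : i < n) :
    regularizedGram K (fun j => α • e j) n lam (e i) = (α ^ 2 / n + lam) • e i := by
  have hsum : ∑ j ∈ range n, ⟪α • e j, e i⟫ • α • e j = α ^ 2 • e i := by
    conv_rhs => rw [← he.sum_inner_smul_eq_self (mem_range.mpr hi), smul_sum]
    refine sum_congr rfl fun j _ => ?_
    rw [real_inner_smul_left, mul_smul, smul_comm _ α, ← mul_smul, ← sq]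
  have hproj : (K.orthogonalProjectionOnto (e i) : H) = e i :=
    K.starProjection_eq_self_iff.mpr (heK i)
  change ((1 : ℝ) / n) • _ + lam • (K.orthogonalProjectionOnto (e i) : H) = _
  rw [hsum, hproj, smul_smul, ← add_smul, one_div_mul_eq_div]

theorem regularizedGram_apply_of_mem_span {x : H}
    (hx : x ∈ Submodule.span ℝ (e '' Set.Iio n)) :
    regularizedGram K (fun j => α • e j) n lam x = (α ^ 2 / n + lam) • x := by
  have hspan : Submodule.span ℝ (e '' Set.Iio n) ≤
      Module.End.eigenspace (regularizedGram K (fun j => α • e j) n lam) (α ^ 2 / n + lam) :=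
    Submodule.span_le.mpr <| by
      rintro _ ⟨i, hi, rfl⟩
      exact Module.End.mem_eigenspace_iff.mpr (regularizedGram_apply_of_lt he heK α lam hi)
  exact Module.End.mem_eigenspace_iff.mp (hspan hx)

end RegularizedGram

theorem tendsto_natCast_mul_div_add_rpow_neg_sq {a p : ℝ} (ha : 0 ≤ a) (hp : 1 / 2 < p) :
    Tendsto (fun n : ℕ => (n : ℝ) * (a / n + (n : ℝ) ^ (-p)) ^ 2) atTop (𝓝[>] 0) := by
  have hexpand : ∀ᶠ n : ℕ in atTop, a ^ 2 * (n : ℝ) ^ (-1 : ℝ) + 2 * a * (n : ℝ) ^ (-p)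
      + (n : ℝ) ^ (-(2 * p - 1)) = (n : ℝ) * (a / n + (n : ℝ) ^ (-p)) ^ 2 := by
    filter_upwards [eventually_gt_atTop 0] with n hn
    have hn : (0 : ℝ) < n := Nat.cast_pos.mpr hn
    rw [Real.rpow_neg_one, show -(2 * p - 1) = 1 + -p + -p by ring,
      Real.rpow_add hn, Real.rpow_add hn, Real.rpow_one]
    field_simp
    ring
  have hpow : ∀ r : ℝ, 0 < r → Tendsto (fun n : ℕ => (n : ℝ) ^ (-r)) atTop (𝓝 0) :=
    fun r hr => (tendsto_rpow_neg_atTop hr).comp tendsto_natCast_atTop_atTop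
  have hlim : Tendsto (fun n : ℕ => a ^ 2 * (n : ℝ) ^ (-1 : ℝ) + 2 * a * (n : ℝ) ^ (-p)
      + (n : ℝ) ^ (-(2 * p - 1))) atTop (𝓝 0) := by
    have := (((hpow 1 one_pos).const_mul (a ^ 2)).add
      ((hpow p (by linarith)).const_mul (2 * a))).add (hpow (2 * p - 1) (by linarith))
    simpa only [mul_zero, add_zero] using this
  refine tendsto_nhdsWithin_iff.mpr ⟨hlim.congr' hexpand, ?_⟩
  filter_upwards [eventually_gt_atTop 0] with n hn
  have hn : (0 : ℝ) < n := Nat.cast_pos.mpr hn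
  exact Set.mem_Ioi.mpr (by positivity)

theorem sharpness_blow_up_construction_general
    {H : Type*} [NormedAddCommGroup H] [InnerProductSpace ℝ H]
    (H1 : Submodule ℝ H) [H1.HasOrthogonalProjection]
    (e : ℕ → H) (he : Orthonormal ℝ e) (heH1 : ∀ i, e i ∈ H1)
    (α : ℝ) (hα : 0 < α) (η : ℕ → H) (hη : ∀ i, η i = α • e i)
    {Ω : Type*} [MeasurableSpace Ω] (P : Measure Ω)
    (ε : ℕ → Ω → ℝ) (σ : ℝ) (hσ : 0 < σ)
    (hL2 : ∀ i, MemLp (ε i) 2 P)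
    (hvar : ∀ i, ∫ ω, (ε i ω) ^ 2 ∂P = σ ^ 2)
    (G : ℕ → ℝ → H → H)
    (hG : ∀ (n : ℕ) (lam : ℝ) (μ : H), G n lam μ
      = ((1 : ℝ) / n) • ∑ i ∈ Finset.range n, ⟪η i, μ⟫ • η i
        + lam • (H1.orthogonalProjectionOnto μ : H))
    (ν : ℕ → Ω → H)
    (hν : ∀ (n : ℕ) (ω : Ω), ν n ω = ((1 : ℝ) / n) • ∑ i ∈ Finset.range n, ε i ω • η i) :
    (∀ (n : ℕ) (lam : ℝ), 0 < lam → ∀ i < n,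
      G n lam (e i) = (α ^ 2 / n + lam) • e i) ∧
    (∀ (n : ℕ) (ω : Ω), ν n ω ∈ Submodule.span ℝ (e '' Set.Iio n)) ∧
    (∀ n : ℕ, 0 < n → ∀ lam : ℝ, 0 < lam →
      (∀ ω : Ω, G n lam ((α ^ 2 / n + lam)⁻¹ • ν n ω) = ν n ω) ∧
      ∫ ω, ‖(α ^ 2 / n + lam)⁻¹ • ν n ω‖ ^ 2 ∂P
        = σ ^ 2 * α ^ 2 / (n * (α ^ 2 / n + lam) ^ 2)) ∧
    (∀ p : ℝ, 1 / 2 < p →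
      Tendsto (fun n : ℕ => σ ^ 2 * α ^ 2 / (n * (α ^ 2 / n + (n : ℝ) ^ (-p)) ^ 2))
        atTop atTop) := by
  obtain rfl : η = fun i => α • e i := funext hη
  have hG' : ∀ n lam, G n lam = regularizedGram H1 (fun i => α • e i) n lam :=
    fun n lam => funext (hG n lam)
  have hν' : ∀ n ω, ν n ω = (α / n) • ∑ i ∈ range n, ε i ω • e i := fun n ω => by
    simp only [hν, smul_sum, smul_smul]
    exact sum_congr rfl fun i _ => congrArg (· • e i) (by ring)
  have hspan : ∀ n ω, ν n ω ∈ Submodule.span ℝ (e '' Set.Iio n) := fun n ω => by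
    rw [hν']
    exact Submodule.smul_mem _ _ (sum_range_smul_mem_span_image_Iio e _ n)
  refine ⟨fun n lam _ i hi => hG' n lam ▸ regularizedGram_apply_of_lt he heH1 α lam hi, hspan,
    fun n hn lam hlam => ⟨fun ω => ?_, ?_⟩, fun p hp => ?_⟩
  · have hc : α ^ 2 / n + lam ≠ 0 := by positivity
    rw [hG', map_smul, regularizedGram_apply_of_mem_span he heH1 α lam (hspan n ω), smul_smul,
      inv_mul_cancel₀ hc, one_smul]
  · have hn : (n : ℝ) ≠ 0 := by positivity
    simp_rw [hν', smul_smul]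
    rw [he.integral_norm_smul_sum_sq hL2 hvar, card_range]
    field_simp
  · have hC : 0 < σ ^ 2 * α ^ 2 := by positivity
    have hden := tendsto_natCast_mul_div_add_rpow_neg_sq (sq_nonneg α) hp
    simpa only [div_eq_mul_inv, Pi.inv_apply] using hden.inv_tendsto_nhdsGT_zero.const_mul_atTop hC

/-- **sharpness of the scaling regime.** Let `H1` be an
infinite-dimensional closed subspace of a real Hilbert space `H` with orthogonal projection
`χ1`, let `(e i)` be an orthonormal sequence in `H1`, `α > 0`, `η i = α • e i`, and for
`λ > 0` let `G_{n,λ} μ = (1/n) ∑_{i<n} ⟪η i, μ⟫ η i + λ χ1 μ`. Let `ε_1, …, ε_n, …` be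
independent real random variables with mean `0` and variance `σ² > 0` and set
`ν_n = (1/n) ∑_{i<n} ε i • η i`. Then `G_{n,λ} (e i) = (α²/n + λ) e i` for `i < n`, `ν_n`
lies in `span {e_0, …, e_{n-1}}` so that `G_{n,λ}⁻¹ ν_n` is well defined (it equals
`(α²/n + λ)⁻¹ ν_n`), and `E[‖G_{n,λ}⁻¹ ν_n‖²] = σ² α² / (n (α²/n + λ)²)`. In particular, if
`λ = λ_n = n^{−p}` with `p > 1/2`, then `E[‖G_{n,λ_n}⁻¹ ν_n‖²] → ∞` as `n → ∞`. -/
theorem sharpness_blow_up_construction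
    {H : Type*} [NormedAddCommGroup H] [InnerProductSpace ℝ H]
    (H1 : Submodule ℝ H) [H1.HasOrthogonalProjection]
    (hH1inf : ¬ FiniteDimensional ℝ H1)
    (e : ℕ → H) (he : Orthonormal ℝ e) (heH1 : ∀ i, e i ∈ H1)
    (α : ℝ) (hα : 0 < α) (η : ℕ → H) (hη : ∀ i, η i = α • e i)
    {Ω : Type*} [MeasurableSpace Ω] (P : Measure Ω) [IsProbabilityMeasure P]
    (ε : ℕ → Ω → ℝ) (σ : ℝ) (hσ : 0 < σ)
    (hindep : iIndepFun ε P)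
    (hL2 : ∀ i, MemLp (ε i) 2 P)
    (hmean : ∀ i, ∫ ω, ε i ω ∂P = 0)
    (hvar : ∀ i, ∫ ω, (ε i ω) ^ 2 ∂P = σ ^ 2)
    (G : ℕ → ℝ → H → H)
    (hG : ∀ (n : ℕ) (lam : ℝ) (μ : H), G n lam μ
      = ((1 : ℝ) / n) • ∑ i ∈ Finset.range n, ⟪η i, μ⟫ • η i
        + lam • (H1.orthogonalProjectionOnto μ : H))
    (ν : ℕ → Ω → H)
    (hν : ∀ (n : ℕ) (ω : Ω), ν n ω = ((1 : ℝ) / n) • ∑ i ∈ Finset.range n, ε i ω • η i) :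
    (∀ (n : ℕ) (lam : ℝ), 0 < lam → ∀ i < n,
      G n lam (e i) = (α ^ 2 / n + lam) • e i) ∧
    (∀ (n : ℕ) (ω : Ω), ν n ω ∈ Submodule.span ℝ (e '' Set.Iio n)) ∧
    (∀ n : ℕ, 0 < n → ∀ lam : ℝ, 0 < lam →
      (∀ ω : Ω, G n lam ((α ^ 2 / n + lam)⁻¹ • ν n ω) = ν n ω) ∧
      ∫ ω, ‖(α ^ 2 / n + lam)⁻¹ • ν n ω‖ ^ 2 ∂P
        = σ ^ 2 * α ^ 2 / (n * (α ^ 2 / n + lam) ^ 2)) ∧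
    (∀ p : ℝ, 1 / 2 < p →
      Tendsto (fun n : ℕ => σ ^ 2 * α ^ 2 / (n * (α ^ 2 / n + (n : ℝ) ^ (-p)) ^ 2))
        atTop atTop) :=
  sharpness_blow_up_construction_general H1 e he heH1 α hα η hη P ε σ hσ hL2 hvar G hG ν hν
end
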